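/- arXiv:1710.07943 — 5 statements merged into one kernel-verified Lean document; each statement's English description precedes it below -/
import Mathlib

section
/- Let n be a positive integer coprime to the prime power q, let w be the smallest positive integer with q^w ≡ 1 (mod rad(n)), and let σ be the Frobenius α ↦ α^q on F_{q^w}. If f(x) is a monic irreducible factor of Φ_n(x) over F_{q^w} whose coefficients do not all lie in any proper subfield of F_{q^w} containing F_q, and w is prime, then the product f(x)·f^σ(x)·f^{σ^2}(x)···f^{σ^{w-1}}(x) has all its coefficients in F_q and is irreducible over F_q. -/
open Polynomial

/-!
Here `σ ^ w = 1` with `w` prime and `σ` fixes exactly `F`. Since the coefficients of `f` are not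
all `σ`-fixed, `f` has trivial stabiliser in `⟨σ⟩`, so its `w` conjugates `f.map (σ ^ k)` are
distinct monic irreducibles, hence pairwise coprime. Their product `P` is `σ`-invariant and so
descends to some `g` over `F`. A nonconstant monic factor of `g` is `σ`-invariant over `K`; it
contains one conjugate, hence all of them, hence `P`, so it has the degree of `g`.
-/

namespace Polynomial

variable {K : Type*} [Field K]

theorem iterate_map_eq_map_pow (σ : K →+* K) (f : K[X]) (k : ℕ) :
    (fun p : K[X] => p.map σ)^[k] f = f.map (σ ^ k) := by
  induction k with
  | zero => rw [Function.iterate_zero_apply, pow_zero, RingHom.one_def, Polynomial.map_id]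
  | succ k ih => rw [Function.iterate_succ_apply', ih, map_map, pow_succ', RingHom.mul_def]

theorem map_map_pow (σ : K →+* K) (f : K[X]) (i j : ℕ) :
    (f.map (σ ^ i)).map (σ ^ j) = f.map (σ ^ (j + i)) := by
  rw [map_map, ← RingHom.mul_def, pow_add]

theorem map_pow_eq_self_of_map_eq_self {σ : K →+* K} {a : K[X]} (ha : a.map σ = a) (m : ℕ) :
    a.map (σ ^ m) = a := by
  rw [← iterate_map_eq_map_pow]
  exact Function.iterate_fixed ha m

section CyclicOrbit

variable {σ : K →+* K} {w : ℕ} {f : K[X]}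

theorem map_prod_map_pow_of_pow_eq_one (hσw : σ ^ w = 1) (hf : f ≠ 0) :
    (∏ k ∈ Finset.range w, f.map (σ ^ k)).map σ = ∏ k ∈ Finset.range w, f.map (σ ^ k) := by
  have hshift : ∀ k, (f.map (σ ^ k)).map σ = f.map (σ ^ (k + 1)) := fun k => by
    rw [map_map, ← RingHom.mul_def, ← pow_succ']
  refine mul_right_cancel₀ (map_ne_zero hf : f.map (σ ^ 0) ≠ 0) ?_
  rw [Polynomial.map_prod, Finset.prod_congr rfl fun k _ => hshift k,
    ← Finset.prod_range_succ' (fun k => f.map (σ ^ k)), Finset.prod_range_succ, hσw, pow_zero]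

theorem irreducible_map_pow_of_pow_eq_one (hσw : σ ^ w = 1) (hf : f.Monic) (hirr : Irreducible f)
    {k : ℕ} (hk : k ≤ w) : Irreducible (f.map (σ ^ k)) :=
  (hf.map _).irreducible_of_irreducible_map (σ ^ (w - k)) _ <| by
    rwa [map_map_pow, Nat.sub_add_cancel hk, hσw, RingHom.one_def, Polynomial.map_id]

/-- A period `0 < d < w` of `f` under `p ↦ p.map σ` would be coprime to the period `w`. -/
theorem injOn_map_pow (hw : w.Prime) (hσw : σ ^ w = 1) (hfσ : f.map σ ≠ f) :
    Set.InjOn (fun k => f.map (σ ^ k)) (Set.Iio w) := by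
  have hper : ∀ {d}, f.map (σ ^ d) = f → Function.IsPeriodicPt (fun p : K[X] => p.map σ) d f :=
    fun h => by rwa [Function.IsPeriodicPt, Function.IsFixedPt, iterate_map_eq_map_pow]
  have hnot : ∀ d, 0 < d → d < w → f.map (σ ^ d) ≠ f := by
    intro d hd hdw hfix
    have hcop : Nat.Coprime d w := (Nat.coprime_comm.mp
      ((hw.coprime_iff_not_dvd).mpr (Nat.not_dvd_of_pos_of_lt hd hdw)))
    have h1 := (hper hfix).gcd (hper (by rw [hσw, RingHom.one_def, Polynomial.map_id]))
    rw [hcop.gcd_eq_one] at h1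
    exact hfσ h1
  intro i hi j hj hij
  wlog hlt : i < j generalizing i j
  · rcases (not_lt.mp hlt).eq_or_lt with h | h
    · exact h.symm
    · exact (this hj hi hij.symm h).symm
  refine absurd ?_ (hnot (j - i) (by omega) ((Nat.sub_le j i).trans_lt hj))
  apply map_injective _ (σ ^ i).injective
  rw [map_map_pow, Nat.add_sub_cancel' hlt.le]
  exact hij.symm

theorem map_pow_dvd_of_map_eq_self (hσw : σ ^ w = 1) {a : K[X]} (ha : a.map σ = a) {k : ℕ}
    (hk : k ≤ w) (hdvd : f.map (σ ^ k) ∣ a) (i : ℕ) : f.map (σ ^ i) ∣ a := by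
  have := map_dvd (σ ^ (w - k + i)) hdvd
  rwa [map_map_pow, map_pow_eq_self_of_map_eq_self ha, show w - k + i + k = w + i by omega,
    pow_add, hσw, one_mul] at this

theorem pairwise_isCoprime_map_pow (hσw : σ ^ w = 1) (hf : f.Monic) (hirr : Irreducible f)
    (hinj : Set.InjOn (fun k => f.map (σ ^ k)) (Set.Iio w)) :
    (↑(Finset.range w) : Set ℕ).Pairwise (Function.onFun IsCoprime fun k => f.map (σ ^ k)) := by
  intro i hi j hj hij
  simp only [Finset.coe_range, Set.mem_Iio] at hi hj
  have hirr_i := irreducible_map_pow_of_pow_eq_one hσw hf hirr hi.le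
  rw [Function.onFun_apply, hirr_i.coprime_iff_not_dvd]
  intro hdvd
  exact hij <| hinj hi hj <| eq_of_monic_of_associated (hf.map _) (hf.map _) <|
    hirr_i.associated_of_dvd (irreducible_map_pow_of_pow_eq_one hσw hf hirr hj.le) hdvd

theorem prod_map_pow_dvd_of_map_eq_self (hσw : σ ^ w = 1) (hf : f.Monic) (hirr : Irreducible f)
    (hinj : Set.InjOn (fun k => f.map (σ ^ k)) (Set.Iio w)) {a : K[X]} (ha : a.map σ = a)
    (haP : a ∣ ∏ k ∈ Finset.range w, f.map (σ ^ k)) (hdeg : a.natDegree ≠ 0) :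
    ∏ k ∈ Finset.range w, f.map (σ ^ k) ∣ a := by
  have ha0 : a ≠ 0 := by rintro rfl; exact hdeg natDegree_zero
  obtain ⟨r, hr, hra⟩ := WfDvdMonoid.exists_irreducible_factor
    (fun hu => hdeg (natDegree_eq_zero_of_isUnit hu)) ha0
  obtain ⟨k, hk, hrk⟩ := hr.prime.exists_mem_finset_dvd (hra.trans haP)
  rw [Finset.mem_range] at hk
  have hrk' := hr.associated_of_dvd (irreducible_map_pow_of_pow_eq_one hσw hf hirr hk.le) hrk
  have hka : f.map (σ ^ k) ∣ a := hrk'.symm.dvd.trans hra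
  exact Finset.prod_dvd_of_coprime (pairwise_isCoprime_map_pow hσw hf hirr hinj)
    fun i _ => map_pow_dvd_of_map_eq_self hσw ha hk.le hka i

end CyclicOrbit

section Descent

variable {F : Type*} [Field F] [Algebra F K] {σ : K →+* K}

theorem lifts_of_map_eq_self (hfix : ∀ x, σ x = x → x ∈ Set.range (algebraMap F K)) {p : K[X]}
    (hp : p.map σ = p) : p ∈ lifts (algebraMap F K) :=
  (lifts_iff_coeff_lifts p).2 fun n => hfix _ (by rw [← coeff_map, hp])

theorem exists_irreducible_map_eq_prod_map_pow {w : ℕ} (hw : w.Prime) (hσw : σ ^ w = 1)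
    (hσF : σ.comp (algebraMap F K) = algebraMap F K)
    (hfix : ∀ x, σ x = x → x ∈ Set.range (algebraMap F K))
    {f : K[X]} (hf : f.Monic) (hirr : Irreducible f) (hfσ : f.map σ ≠ f) :
    ∃ g : F[X], g.map (algebraMap F K) = ∏ k ∈ Finset.range w, f.map (σ ^ k) ∧ Irreducible g := by
  obtain ⟨g, hgP, -, hg⟩ := lifts_and_degree_eq_and_monic
    (lifts_of_map_eq_self hfix (map_prod_map_pow_of_pow_eq_one hσw hf.ne_zero))
    (monic_prod_of_monic _ _ fun k _ => hf.map (σ ^ k))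
  refine ⟨g, hgP, hg.irreducible_iff_natDegree.2 ⟨?_, fun a b ha hb hab => ?_⟩⟩
  · rintro rfl
    have hfP : f ∣ ∏ k ∈ Finset.range w, f.map (σ ^ k) := by
      simpa [RingHom.one_def] using Finset.dvd_prod_of_mem (fun k => f.map (σ ^ k))
        (Finset.mem_range.2 hw.pos)
    rw [← hgP, Polynomial.map_one] at hfP
    exact hirr.not_isUnit (isUnit_of_dvd_one hfP)
  rw [or_iff_not_imp_left]
  intro ha0
  have hPa : _ ∣ a.map (algebraMap F K) :=
    prod_map_pow_dvd_of_map_eq_self hσw hf hirr (injOn_map_pow hw hσw hfσ)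
      (by rw [map_map, hσF]) (by rw [← hgP, ← hab]; exact map_dvd _ (dvd_mul_right a b))
      (by rwa [natDegree_map])
  have hdeg := natDegree_le_of_dvd hPa (map_ne_zero ha.ne_zero)
  rw [← hgP, ← hab, natDegree_map, natDegree_map, natDegree_mul ha.ne_zero hb.ne_zero] at hdeg
  omega

end Descent

end Polynomial

theorem FiniteField.mem_range_algebraMap_of_pow_card_eq_self {F K : Type*} [Field F] [Fintype F]
    [Field K] [Finite K] [Algebra F K] {x : K} (hx : x ^ Fintype.card F = x) :
    x ∈ Set.range (algebraMap F K) := by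
  rw [IsGalois.mem_range_algebraMap_iff_fixed]
  intro τ
  obtain ⟨n, rfl⟩ := (FiniteField.bijective_frobeniusAlgEquivOfAlgebraic_pow F K).2 τ
  rw [AlgEquiv.coe_pow, FiniteField.coe_frobeniusAlgEquivOfAlgebraic]
  exact Function.iterate_fixed hx n

theorem RingHom.fieldRange_ne_top_of_card_lt {F K : Type*} [Field F] [Field K] [Fintype F]
    [Fintype K] (φ : F →+* K) (h : Fintype.card F < Fintype.card K) : φ.fieldRange ≠ ⊤ :=
  fun htop => h.not_ge <| Fintype.card_le_of_surjective φ fun x =>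
    RingHom.mem_fieldRange.1 (htop ▸ Subfield.mem_top x)

theorem stmt_7_general {F K : Type*} [Field F] [Field K] [Fintype F] [Fintype K]
    [Algebra F K] (q w : ℕ)
    (hF : Fintype.card F = q) (hK : Fintype.card K = q ^ w)
    (hwp : w.Prime)
    (σ : K →+* K) (hσ : ∀ x : K, σ x = x ^ q)
    (f : K[X]) (hf : f.Monic) (hirr : Irreducible f)
    (hnotsub : ∀ S : Subfield K, S ≠ ⊤ → Set.range (algebraMap F K) ⊆ (S : Set K) →
      ¬ (∀ i : ℕ, f.coeff i ∈ S)) :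
    ∃ g : F[X],
      g.map (algebraMap F K) = ∏ k ∈ Finset.range w, (fun p : K[X] => p.map σ)^[k] f ∧
      Irreducible g := by
  subst hF
  have hσw : σ ^ w = 1 := by
    ext x
    rw [RingHom.coe_pow, show ⇑σ = (· ^ Fintype.card F) from funext hσ, pow_iterate, ← hK,
      RingHom.one_def, RingHom.id_apply]
    exact FiniteField.pow_card x
  have hσF : σ.comp (algebraMap F K) = algebraMap F K := by
    ext y
    rw [RingHom.comp_apply, hσ, ← map_pow, FiniteField.pow_card]
  have hfix : ∀ x, σ x = x → x ∈ Set.range (algebraMap F K) := fun x hx =>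
    FiniteField.mem_range_algebraMap_of_pow_card_eq_self (hσ x ▸ hx)
  have hproper : (algebraMap F K).fieldRange ≠ ⊤ := RingHom.fieldRange_ne_top_of_card_lt _ <|
    hK ▸ lt_self_pow₀ Fintype.one_lt_card hwp.one_lt
  have hfσ : f.map σ ≠ f := fun h =>
    hnotsub _ hproper (RingHom.coe_fieldRange _).ge
      ((lifts_iff_coeff_lifts f).1 (lifts_of_map_eq_self hfix h))
  simp_rw [iterate_map_eq_map_pow]
  exact exists_irreducible_map_eq_prod_map_pow hwp hσw hσF hfix hf hirr hfσ

theorem stmt_7 {F K : Type*} [Field F] [Field K] [Fintype F] [Fintype K]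
    [Algebra F K] (q n w : ℕ)
    (hq : IsPrimePow q) (hF : Fintype.card F = q) (hK : Fintype.card K = q ^ w)
    (hn : 0 < n) (hcop : Nat.Coprime n q) (hwp : w.Prime)
    (hw2 : q ^ w ≡ 1 [MOD n.primeFactors.prod id])
    (hwmin : ∀ k : ℕ, 0 < k → q ^ k ≡ 1 [MOD n.primeFactors.prod id] → w ≤ k)
    (σ : K →+* K) (hσ : ∀ x : K, σ x = x ^ q)
    (f : K[X]) (hf : f.Monic) (hirr : Irreducible f)
    (hdvd : f ∣ cyclotomic n K)
    (hnotsub : ∀ S : Subfield K, S ≠ ⊤ → Set.range (algebraMap F K) ⊆ (S : Set K) →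
      ¬ (∀ i : ℕ, f.coeff i ∈ S)) :
    ∃ g : F[X],
      g.map (algebraMap F K) = ∏ k ∈ Finset.range w, (fun p : K[X] => p.map σ)^[k] f ∧
      Irreducible g :=
  stmt_7_general q w hF hK hwp σ hσ f hf hirr hnotsub
end

section
/- Let F_q be a finite field and n a positive integer with rad(n) | q-1, q ≢ 3 (mod 4) or 8 ∤ n. Set m₁ = n/gcd(n,q-1). Then for each divisor t of m₁, the number of monic irreducible factors of x^n - 1 over F_q of degree t is (φ(t)/t) · gcd(n, q-1), and x^n-1 has no irreducible factors whose degree does not divide m₁. -/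
open Polynomial UniqueFactorizationMonoid


private lemma nat_pow_sub_one_dvd {q s t : ℕ} (hst : s ∣ t) : q ^ s - 1 ∣ q ^ t - 1 := by
  obtain ⟨k, rfl⟩ := hst
  rw [pow_mul]
  simpa using Nat.sub_dvd_pow_sub_pow (q ^ s) 1 k

private lemma nat_dvd_of_pow_sub_one_dvd {q : ℕ} (hq : 2 ≤ q) {s t : ℕ} (hs : s ≠ 0)
    (h : q ^ s - 1 ∣ q ^ t - 1) : s ∣ t := by
  induction t using Nat.strong_induction_on with
  | _ t ih =>
    rcases Nat.lt_or_ge t s with hts | hts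
    · have ht0 : t = 0 := by
        by_contra ht0
        have h1 : 2 ≤ q ^ t := le_trans hq (Nat.le_self_pow ht0 q)
        have h2 : q ^ t < q ^ s := Nat.pow_lt_pow_right (by omega) hts
        have := Nat.le_of_dvd (by omega) h
        omega
      simp [ht0]
    · have hs' : 1 ≤ s := Nat.pos_of_ne_zero hs
      have hB : 1 ≤ q ^ (t - s) := Nat.one_le_pow _ _ (by omega)
      have hA : q ^ t = q ^ (t - s) * q ^ s := by rw [← pow_add]; congr 1; omega
      have hBA : q ^ (t - s) ≤ q ^ t := Nat.pow_le_pow_right (by omega) (by omega)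
      have hBC : q ^ t - q ^ (t - s) = q ^ (t - s) * (q ^ s - 1) := by
        rw [Nat.mul_sub, mul_one, ← hA]
      have h2 : q ^ s - 1 ∣ q ^ t - q ^ (t - s) := by rw [hBC]; exact Dvd.intro_left _ rfl
      have h3 : q ^ s - 1 ∣ q ^ (t - s) - 1 := by
        have := Nat.dvd_sub h h2
        have heq : q ^ t - 1 - (q ^ t - q ^ (t - s)) = q ^ (t - s) - 1 := by omega
        rwa [heq] at this
      have h4 := ih (t - s) (by omega) h3
      obtain ⟨c, hc⟩ := h4
      exact ⟨c + 1, by rw [Nat.mul_add, ← hc, mul_one]; omega⟩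

private lemma nat_geom_sum : ∀ (q t : ℕ), 1 ≤ q →
    (q - 1) * (∑ i ∈ Finset.range t, q ^ i) = q ^ t - 1 := by
  intro q t hq
  induction t with
  | zero => simp
  | succ t ih =>
    have h1 : q * q ^ t = q ^ (t + 1) := (pow_succ' q t).symm
    have h2 : q ^ t ≤ q * q ^ t := Nat.le_mul_of_pos_left _ (by omega)
    have h3 : 1 ≤ q ^ t := Nat.one_le_pow _ _ (by omega)
    rw [Finset.sum_range_succ, Nat.mul_add, ih, Nat.sub_mul, one_mul]
    omega

private lemma padicValNat_two_pow_sub_one_odd {q t : ℕ} (hq : 2 ≤ q) (hq_odd : Odd q)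
    (ht_odd : Odd t) : padicValNat 2 (q ^ t - 1) = padicValNat 2 (q - 1) := by
  have hS : (q - 1) * (∑ i ∈ Finset.range t, q ^ i) = q ^ t - 1 := nat_geom_sum q t (by omega)
  have hSodd : ¬ (2 ∣ ∑ i ∈ Finset.range t, q ^ i) := by
    have hmod : (∑ i ∈ Finset.range t, q ^ i) % 2 = 1 := by
      rw [Finset.sum_nat_mod]
      rw [Finset.sum_congr rfl (fun i _ => Nat.odd_iff.mp (hq_odd.pow))]
      simp [Nat.odd_iff.mp ht_odd]
    omega
  have hS0 : (∑ i ∈ Finset.range t, q ^ i) ≠ 0 := by intro h; rw [h] at hSodd; simp at hSodd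
  rw [← hS, padicValNat.mul (by omega) hS0, padicValNat.eq_zero_of_not_dvd hSodd, add_zero]
private lemma gcd_pow_sub_one_eq {q n t : ℕ} (hq : 2 ≤ q) (hn : 0 < n)
    (hrad : ∀ p, Nat.Prime p → p ∣ n → p ∣ q - 1)
    (hcase : q % 4 ≠ 3 ∨ ¬ (8 ∣ n)) (ht0 : 0 < t)
    (hte : t * Nat.gcd n (q - 1) ∣ n) :
    Nat.gcd n (q ^ t - 1) = t * Nat.gcd n (q - 1) := by
  set e := Nat.gcd n (q - 1) with he_def
  have hq1 : 1 ≤ q - 1 := by omega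
  have he1 : 1 ≤ e := Nat.gcd_pos_of_pos_left _ hn
  have heq1 : e ∣ q - 1 := Nat.gcd_dvd_right _ _
  have hqt2 : 2 ≤ q ^ t := le_trans hq (Nat.le_self_pow ht0.ne' q)
  have hqt0 : q ^ t - 1 ≠ 0 := by omega
  have hte0 : t * e ≠ 0 := by positivity
  have keyfacts : ∀ p : ℕ, Nat.Prime p → p ∣ n → 1 ≤ padicValNat p (q - 1) ∧ ¬ p ∣ q := by
    intro p hp hpn
    have hpq1 : p ∣ q - 1 := hrad p hp hpn
    refine ⟨?_, ?_⟩
    · rw [← Nat.factorization_def _ hp]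
      exact Nat.Prime.factorization_pos_of_dvd hp (by omega) hpq1
    · intro hpq
      have h1 : p ∣ q - (q - 1) := Nat.dvd_sub hpq hpq1
      rw [Nat.sub_sub_self (by omega : 1 ≤ q)] at h1
      exact hp.one_lt.ne' (Nat.dvd_one.mp h1)
  have hve : ∀ p : ℕ, Nat.Prime p → padicValNat p e
      = min (padicValNat p n) (padicValNat p (q - 1)) := by
    intro p hp
    have h2 := DFunLike.congr_fun (Nat.factorization_gcd hn.ne' (show q - 1 ≠ 0 by omega)) p
    rw [← he_def, Finsupp.inf_apply, Nat.factorization_def _ hp, Nat.factorization_def _ hp,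
      Nat.factorization_def _ hp] at h2
    exact h2
  apply Nat.dvd_antisymm
  · -- gcd n (q^t - 1) ∣ t * e
    rw [← Nat.factorization_le_iff_dvd (Nat.gcd_pos_of_pos_left _ hn).ne' hte0]
    rw [Finsupp.le_def]
    intro p
    by_cases hp : Nat.Prime p
    swap
    · simp [Nat.factorization_eq_zero_of_not_prime _ hp]
    haveI : Fact p.Prime := ⟨hp⟩
    rw [Nat.factorization_gcd hn.ne' hqt0, Finsupp.inf_apply, Nat.factorization_mul
      (by omega) (by omega), Finsupp.add_apply]
    rw [Nat.factorization_def _ hp, Nat.factorization_def _ hp, Nat.factorization_def _ hp,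
      Nat.factorization_def _ hp]
    have hvem := hve p hp
    by_cases hpn : p ∣ n
    swap
    · have hvn : padicValNat p n = 0 := padicValNat.eq_zero_of_not_dvd hpn
      omega
    obtain ⟨hb1, hpq⟩ := keyfacts p hp hpn
    have hvn1 : 1 ≤ padicValNat p n := by
      rw [← Nat.factorization_def _ hp]
      exact Nat.Prime.factorization_pos_of_dvd hp hn.ne' hpn
    rcases hp.eq_two_or_odd' with rfl | hodd_p
    · -- p = 2
      have hq_odd : 2 ≤ q ∧ q % 2 = 1 := ⟨hq, by omega⟩
      rcases Nat.even_or_odd t with ht_even | ht_odd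
      · have E := padicValNat.pow_two_sub_pow (x := q) (y := 1) (by omega)
          (by simpa using hrad 2 hp hpn) hpq ht0.ne' ht_even
        simp only [one_pow, mul_one] at E
        have hvt1 : 1 ≤ padicValNat 2 t := by
          rw [← Nat.factorization_def _ hp]
          exact Nat.Prime.factorization_pos_of_dvd hp ht0.ne' ht_even.two_dvd
        rcases (by omega : q % 4 = 1 ∨ q % 4 = 3) with h4 | h4
        · have hvp1 : padicValNat 2 (q + 1) = 1 := by
            have h2d : ¬ (2 ^ 2 ∣ q + 1) := by omega
            have hle : padicValNat 2 (q + 1) < 2 := by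
              by_contra hcon
              exact h2d (dvd_trans (pow_dvd_pow 2 (by omega)) pow_padicValNat_dvd)
            have hge : 1 ≤ padicValNat 2 (q + 1) := by
              rw [← Nat.factorization_def _ hp]
              exact Nat.Prime.factorization_pos_of_dvd hp (by omega) (by omega)
            omega
          omega
        · have h8 : ¬ 8 ∣ n := hcase.resolve_left (by omega)
          have hvn2 : padicValNat 2 n ≤ 2 := by
            by_contra hcon
            exact h8 (dvd_trans (pow_dvd_pow 2 (by omega : 3 ≤ padicValNat 2 n))
              pow_padicValNat_dvd)
          omega
      · have hvt0 : padicValNat 2 t = 0 :=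
          padicValNat.eq_zero_of_not_dvd (by have := Nat.odd_iff.mp ht_odd; omega)
        have hv : padicValNat 2 (q ^ t - 1) = padicValNat 2 (q - 1) :=
          padicValNat_two_pow_sub_one_odd hq (Nat.odd_iff.mpr (by omega)) ht_odd
        omega
    · have E := padicValNat.pow_sub_pow hodd_p (by omega : 1 < q)
        (by simpa using hrad p hp hpn) hpq ht0.ne'
      simp only [one_pow] at E
      omega
  · refine Nat.dvd_gcd hte ?_
    rw [← Nat.factorization_le_iff_dvd hte0 hqt0, Finsupp.le_def]
    intro p
    by_cases hp : Nat.Prime p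
    swap
    · simp [Nat.factorization_eq_zero_of_not_prime _ hp]
    haveI : Fact p.Prime := ⟨hp⟩
    rw [Nat.factorization_mul (by omega) (by omega), Finsupp.add_apply]
    rw [Nat.factorization_def _ hp, Nat.factorization_def _ hp, Nat.factorization_def _ hp]
    by_cases hpd : p ∣ t * e
    swap
    · have h1 : padicValNat p t = 0 :=
        padicValNat.eq_zero_of_not_dvd (fun h => hpd (h.mul_right e))
      have h2 : padicValNat p e = 0 :=
        padicValNat.eq_zero_of_not_dvd (fun h => hpd (h.mul_left t))
      omega
    have hpn : p ∣ n := hpd.trans hte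
    obtain ⟨hb1, hpq⟩ := keyfacts p hp hpn
    have hveb : padicValNat p e ≤ padicValNat p (q - 1) := by
      have h3 := (Nat.factorization_le_iff_dvd (by omega) (by omega : q - 1 ≠ 0)).mpr heq1
      rw [Finsupp.le_def] at h3
      have h4 := h3 p
      rwa [Nat.factorization_def _ hp, Nat.factorization_def _ hp] at h4
    rcases hp.eq_two_or_odd' with rfl | hodd_p
    · rcases Nat.even_or_odd t with ht_even | ht_odd
      · have E := padicValNat.pow_two_sub_pow (x := q) (y := 1) (by omega)
          (by simpa using hrad 2 hp hpn) hpq ht0.ne' ht_even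
        simp only [one_pow, mul_one] at E
        have hvp1 : 1 ≤ padicValNat 2 (q + 1) := by
          rw [← Nat.factorization_def _ hp]
          refine Nat.Prime.factorization_pos_of_dvd hp (by omega) ?_
          have : ¬ 2 ∣ q := hpq
          omega
        omega
      · have hvt0 : padicValNat 2 t = 0 :=
          padicValNat.eq_zero_of_not_dvd (by have := Nat.odd_iff.mp ht_odd; omega)
        have hv : padicValNat 2 (q ^ t - 1) = padicValNat 2 (q - 1) := by
          refine padicValNat_two_pow_sub_one_odd hq (Nat.odd_iff.mpr ?_) ht_odd
          have : ¬ 2 ∣ q := hpq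
          omega
        omega
    · have E := padicValNat.pow_sub_pow hodd_p (by omega : 1 < q)
        (by simpa using hrad p hp hpn) hpq ht0.ne'
      simp only [one_pow] at E
      omega
private lemma root_pow_eq_one_iff {F : Type*} [Field F] (g : F[X]) (a : ℕ) :
    g ∣ X ^ a - 1 ↔ (AdjoinRoot.root g) ^ a = 1 := by
  rw [← AdjoinRoot.mk_eq_zero, map_sub, map_pow, AdjoinRoot.mk_X, map_one, sub_eq_zero]

private lemma irred_dvd_X_pow_gcd_sub_one {F : Type*} [Field F] {g : F[X]} {a b : ℕ}
    (hga : g ∣ X ^ a - 1) (hgb : g ∣ X ^ b - 1) : g ∣ X ^ Nat.gcd a b - 1 := by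
  rw [root_pow_eq_one_iff] at *
  exact orderOf_dvd_iff_pow_eq_one.mp
    (Nat.dvd_gcd (orderOf_dvd_of_pow_eq_one hga) (orderOf_dvd_of_pow_eq_one hgb))

private lemma dvd_X_pow_card_pow_sub_X_iff {F : Type*} [Field F] [Fintype F] {g : F[X]}
    (hm : g.Monic) (hi : Irreducible g) {t : ℕ} (ht : t ≠ 0) :
    g ∣ X ^ (Fintype.card F) ^ t - X ↔ g.natDegree ∣ t := by
  classical
  haveI := Fact.mk hi
  have hg0 : g ≠ 0 := hm.ne_zero
  set K := AdjoinRoot g with hK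
  let pb := AdjoinRoot.powerBasis hg0
  haveI : Module.Finite F K := Module.Finite.of_basis pb.basis
  haveI : Finite K := Module.finite_of_finite F
  haveI : Fintype K := Fintype.ofFinite K
  have hcard : Fintype.card K = (Fintype.card F) ^ g.natDegree := by
    rw [Module.card_eq_pow_finrank (K := F) (V := K), pb.finrank, AdjoinRoot.powerBasis_dim]
  have hq2 : 1 < Fintype.card F := Fintype.one_lt_card
  constructor
  · intro hdvd
    have hx : (AdjoinRoot.root g) ^ (Fintype.card F) ^ t = AdjoinRoot.root g := by
      have h1 := AdjoinRoot.mk_eq_zero.mpr hdvd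
      rw [map_sub, map_pow, AdjoinRoot.mk_X, sub_eq_zero] at h1
      exact h1
    -- char facts
    set p := ringChar F with hp_def
    haveI : CharP F p := ringChar.charP F
    have hp : p.Prime := CharP.char_is_prime F p
    obtain ⟨r, hpp, hcardF⟩ := FiniteField.card F p
    haveI : CharP K p := charP_of_injective_algebraMap (algebraMap F K).injective p
    haveI : ExpChar K p := ExpChar.prime hp
    have hqt : (Fintype.card F) ^ t = p ^ ((r : ℕ) * t) := by rw [hcardF, ← pow_mul]
    have hext : (iterateFrobenius K p ((r : ℕ) * t)).comp (AdjoinRoot.mk g)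
        = AdjoinRoot.mk g := by
      apply Polynomial.ringHom_ext
      · intro a
        rw [RingHom.comp_apply]
        rw [iterateFrobenius_def]
        rw [← map_pow, ← hqt]
        congr 1
        rw [← map_pow (C : F →+* F[X])]
        congr 1
        exact FiniteField.pow_card_pow t a
      · rw [RingHom.comp_apply, AdjoinRoot.mk_X, iterateFrobenius_def, ← hqt]
        exact hx
    have hall : ∀ y : K, y ^ (Fintype.card F) ^ t = y := by
      intro y
      obtain ⟨f, rfl⟩ := AdjoinRoot.mk_surjective y
      have := RingHom.congr_fun hext f
      rwa [RingHom.comp_apply, iterateFrobenius_def, ← hqt] at this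
    obtain ⟨ξ, hξ⟩ := IsCyclic.exists_generator (α := Kˣ)
    have hord : orderOf ξ = Fintype.card K - 1 := by
      rw [orderOf_eq_card_of_forall_mem_zpowers hξ, Nat.card_eq_fintype_card,
        Fintype.card_units]
    have hξpow : ξ ^ ((Fintype.card F) ^ t - 1) = 1 := by
      have h1 : ξ ^ (Fintype.card F) ^ t = ξ := Units.ext (by
        rw [Units.val_pow_eq_pow_val]; exact hall ξ)
      have h2 : ξ ^ ((Fintype.card F) ^ t - 1) * ξ = ξ := by
        rw [← pow_succ, Nat.sub_add_cancel (Nat.one_le_pow _ _ (by omega))]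
        exact h1
      have := mul_right_cancel (h2.trans (one_mul ξ).symm)
      exact this
    have hdvd2 : (Fintype.card F) ^ g.natDegree - 1 ∣ (Fintype.card F) ^ t - 1 := by
      rw [← hcard]
      have := orderOf_dvd_of_pow_eq_one hξpow
      rwa [hord] at this
    exact nat_dvd_of_pow_sub_one_dvd hq2 (by
      have := hi.natDegree_pos
      omega) hdvd2
  · rintro ⟨k, hk⟩
    rw [← AdjoinRoot.mk_eq_zero, map_sub, map_pow, AdjoinRoot.mk_X, sub_eq_zero]
    have h1 : (Fintype.card F) ^ t = (Fintype.card K) ^ k := by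
      rw [hcard, ← pow_mul, hk]
    rw [h1]
    exact FiniteField.pow_card_pow k _

private lemma mem_factors_iff' {F : Type*} [Field F] [DecidableEq F] {P g : F[X]} (hP : P ≠ 0) :
    g ∈ (normalizedFactors P).toFinset ↔ g.Monic ∧ Irreducible g ∧ g ∣ P := by
  classical
  rw [Multiset.mem_toFinset]
  constructor
  · intro h
    have hirr := irreducible_of_normalized_factor g h
    refine ⟨?_, hirr, dvd_of_mem_normalizedFactors h⟩
    rw [← normalize_normalized_factor g h]
    exact monic_normalize hirr.ne_zero
  · rintro ⟨hmon, hirr, hdvd⟩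
    obtain ⟨h, hh, hass⟩ := exists_mem_normalizedFactors_of_dvd hP hirr hdvd
    have hgh : g = h := by
      rw [← hmon.normalize_eq_self, ← normalize_normalized_factor h hh]
      exact normalize_eq_normalize hass.dvd hass.symm.dvd
    rwa [hgh]

private lemma sum_deg_factors {F : Type*} [Field F] [DecidableEq F] {P : F[X]}
    (hmon : P.Monic) (hsq : Squarefree P) :
    ∑ g ∈ (normalizedFactors P).toFinset, g.natDegree = P.natDegree := by
  classical
  have hP : P ≠ 0 := hmon.ne_zero
  have hnodup : (normalizedFactors P).Nodup := (squarefree_iff_nodup_normalizedFactors hP).mp hsq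
  have hmonics : ∀ f ∈ normalizedFactors P, f.Monic := by
    intro f hf
    exact ((mem_factors_iff' hP).mp (Multiset.mem_toFinset.mpr hf)).1
  have hmp : (normalizedFactors P).prod.Monic := by
    have := monic_multiset_prod_of_monic (normalizedFactors P) id (by simpa using hmonics)
    simpa using this
  have hprod : (normalizedFactors P).prod = P :=
    eq_of_monic_of_associated hmp hmon (prod_normalizedFactors hP)
  have hdeg := natDegree_multiset_prod_of_monic _ hmonics
  rw [hprod] at hdeg
  rw [hdeg]
  have hval : ((normalizedFactors P).toFinset : Finset F[X]).val = normalizedFactors P := by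
    simp [-toFinset_normalizedFactors, Multiset.toFinset_val, Multiset.dedup_eq_self.mpr hnodup]
  rw [Finset.sum, hval]
theorem stmt_10 {F : Type*} [Field F] [Fintype F] (q n : ℕ)
    (hq : Fintype.card F = q) (hn : 0 < n)
    (hrad : n.primeFactors.prod id ∣ (q - 1))
    (hcase : q % 4 ≠ 3 ∨ ¬ (8 ∣ n))
    (m₁ : ℕ) (hm₁ : m₁ = n / Nat.gcd n (q - 1)) :
    (∀ t : ℕ, t ∣ m₁ →
      ({g : F[X] | g.Monic ∧ Irreducible g ∧ g ∣ X ^ n - 1 ∧ g.natDegree = t}.ncard : ℚ) =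
        (Nat.totient t : ℚ) / (t : ℚ) * (Nat.gcd n (q - 1) : ℚ)) ∧
    (∀ g : F[X], g.Monic → Irreducible g → g ∣ X ^ n - 1 → g.natDegree ∣ m₁) := by
  classical
  subst hq
  set q := Fintype.card F with hqdef
  have hq2 : 2 ≤ q := Fintype.one_lt_card
  set e := Nat.gcd n (q - 1) with he_def
  have he_dvd_n : e ∣ n := Nat.gcd_dvd_left _ _
  have he1 : 1 ≤ e := Nat.gcd_pos_of_pos_left _ hn
  have hm₁e : m₁ * e = n := by rw [hm₁]; exact Nat.div_mul_cancel he_dvd_n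
  have hm₁_pos : 0 < m₁ := by
    rcases Nat.eq_zero_or_pos m₁ with h | h
    · rw [h, zero_mul] at hm₁e; omega
    · exact h
  have hrad' : ∀ p, Nat.Prime p → p ∣ n → p ∣ q - 1 := by
    intro p hp hpn
    refine dvd_trans ?_ hrad
    exact Finset.dvd_prod_of_mem id (Nat.mem_primeFactors.mpr ⟨hp, hpn, hn.ne'⟩)
  have hNT : ∀ t : ℕ, 0 < t → t ∣ m₁ → Nat.gcd n (q ^ t - 1) = t * e := by
    intro t ht0 htm
    refine gcd_pow_sub_one_eq hq2 hn hrad' hcase ht0 ?_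
    have h := mul_dvd_mul_right htm e
    rwa [hm₁e] at h
  -- characteristic and squarefreeness
  have hpn0 : ¬ (ringChar F ∣ n) := by
    intro hd
    haveI : CharP F (ringChar F) := ringChar.charP F
    have hp : (ringChar F).Prime := CharP.char_is_prime F (ringChar F)
    obtain ⟨r, hpp, hcardF⟩ := FiniteField.card F (ringChar F)
    have h1 : ringChar F ∣ q := by
      rw [hqdef, hcardF]
      exact dvd_pow_self _ (by exact_mod_cast r.pos.ne')
    have h2 : ringChar F ∣ q - 1 := hrad' _ hp hd
    have h3 : ringChar F ∣ q - (q - 1) := Nat.dvd_sub h1 h2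
    rw [Nat.sub_sub_self (by omega : 1 ≤ q)] at h3
    exact hp.one_lt.ne' (Nat.dvd_one.mp h3)
  have hmonicP : ∀ m : ℕ, m ≠ 0 → (X ^ m - 1 : F[X]).Monic := by
    intro m hm
    simpa using monic_X_pow_sub_C (1 : F) hm
  have hP0 : (X ^ n - 1 : F[X]) ≠ 0 := (hmonicP n hn.ne').ne_zero
  have hsqP : ∀ m : ℕ, m ∣ n → m ≠ 0 → Squarefree (X ^ m - 1 : F[X]) := by
    intro m hmn hm0
    have hmF : (m : F) ≠ 0 := by
      rw [Ne, CharP.cast_eq_zero_iff F (ringChar F) m]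
      intro hd
      exact hpn0 (hd.trans hmn)
    have := (separable_X_pow_sub_C (1 : F) hmF one_ne_zero).squarefree
    simpa using this
  -- polynomial divisibility helpers
  have hXdvd : ∀ a b : ℕ, a ∣ b → (X ^ a - 1 : F[X]) ∣ X ^ b - 1 := by
    rintro a b ⟨k, rfl⟩
    rw [pow_mul]
    simpa using sub_dvd_pow_sub_pow (X ^ a : F[X]) 1 k
  have hXX : ∀ s : ℕ, 0 < s → (X ^ q ^ s - X : F[X]) = X * (X ^ (q ^ s - 1) - 1) := by
    intro s hs
    have h1 : q ^ s - 1 + 1 = q ^ s := by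
      have : 1 ≤ q ^ s := Nat.one_le_pow _ _ (by omega)
      omega
    rw [mul_sub, mul_one, ← pow_succ', h1]
  -- the Finsets
  set Tn : Finset F[X] := (normalizedFactors (X ^ n - 1 : F[X])).toFinset with hTn_def
  set Tfil : ℕ → Finset F[X] := fun s => Tn.filter (fun g => g.natDegree = s) with hTfil_def
  have hAset : ∀ s : ℕ,
      {g : F[X] | g.Monic ∧ Irreducible g ∧ g ∣ X ^ n - 1 ∧ g.natDegree = s} = ↑(Tfil s) := by
    intro s
    ext g
    simp only [Set.mem_setOf_eq, hTfil_def, Finset.coe_filter, hTn_def,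
      mem_factors_iff' hP0]
    tauto
  -- membership characterization for X^(t*e) - 1
  have hTD : ∀ t : ℕ, 0 < t → t ∣ m₁ → ∀ g : F[X],
      g ∈ (normalizedFactors (X ^ (t * e) - 1 : F[X])).toFinset ↔
        (g ∈ Tn ∧ g.natDegree ∣ t) := by
    intro t ht0 htm g
    have hgcd := hNT t ht0 htm
    have hte_n : t * e ∣ n := by
      have h := mul_dvd_mul_right htm e
      rwa [hm₁e] at h
    have hte0 : t * e ≠ 0 := by positivity
    have hPD0 : (X ^ (t * e) - 1 : F[X]) ≠ 0 := (hmonicP _ hte0).ne_zero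
    rw [mem_factors_iff' hPD0, hTn_def, mem_factors_iff' hP0]
    constructor
    · rintro ⟨hmon, hirr, hdvd⟩
      refine ⟨⟨hmon, hirr, hdvd.trans (hXdvd _ _ hte_n)⟩, ?_⟩
      have h1 : g ∣ (X ^ (q ^ t - 1) - 1 : F[X]) :=
        hdvd.trans (hXdvd _ _ (by rw [← hgcd]; exact Nat.gcd_dvd_right _ _))
      have h2 : g ∣ (X ^ q ^ t - X : F[X]) := by
        rw [hXX t ht0]
        exact h1.trans (dvd_mul_left _ _)
      exact (dvd_X_pow_card_pow_sub_X_iff hmon hirr ht0.ne').mp h2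
    · rintro ⟨⟨hmon, hirr, hdvd⟩, hdeg⟩
      refine ⟨hmon, hirr, ?_⟩
      have h2 : g ∣ (X ^ q ^ t - X : F[X]) :=
        (dvd_X_pow_card_pow_sub_X_iff hmon hirr ht0.ne').mpr hdeg
      rw [hXX t ht0] at h2
      have hgP : Prime g := UniqueFactorizationMonoid.irreducible_iff_prime.mp hirr
      rcases hgP.dvd_or_dvd h2 with hX | hQ
      · exfalso
        have h3 : g ∣ (X ^ n : F[X]) := hX.trans (dvd_pow_self X hn.ne')
        have h4 : g ∣ (1 : F[X]) := by
          have := dvd_sub h3 hdvd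
          simpa using this
        exact hirr.not_isUnit (isUnit_of_dvd_one h4)
      · have h5 := irred_dvd_X_pow_gcd_sub_one hdvd hQ
        rwa [hgcd] at h5
  -- the degree-sum identity
  have hsum : ∀ t : ℕ, 0 < t → t ∣ m₁ →
      ∑ s ∈ t.divisors, s * (Tfil s).card = t * e := by
    intro t ht0 htm
    have hte_n : t * e ∣ n := by
      have h := mul_dvd_mul_right htm e
      rwa [hm₁e] at h
    have hte0 : t * e ≠ 0 := by positivity
    set TD : Finset F[X] := (normalizedFactors (X ^ (t * e) - 1 : F[X])).toFinset with hTD_def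
    have hD : ∑ g ∈ TD, g.natDegree = t * e := by
      rw [hTD_def, sum_deg_factors (hmonicP _ hte0) (hsqP _ hte_n hte0)]
      simpa using natDegree_X_pow_sub_C (n := t * e) (r := (1 : F))
    have hmap : ∀ g ∈ TD, g.natDegree ∈ t.divisors := by
      intro g hg
      exact Nat.mem_divisors.mpr ⟨((hTD t ht0 htm g).mp hg).2, ht0.ne'⟩
    have h2 : ∀ s ∈ t.divisors, ∑ g ∈ TD.filter (fun g => g.natDegree = s), g.natDegree
        = s * (Tfil s).card := by
      intro s hs
      have hfe : TD.filter (fun g => g.natDegree = s) = Tfil s := by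
        ext g
        simp only [Finset.mem_filter, hTfil_def]
        constructor
        · rintro ⟨hg, hdeg⟩
          exact ⟨((hTD t ht0 htm g).mp hg).1, hdeg⟩
        · rintro ⟨hg, hdeg⟩
          refine ⟨(hTD t ht0 htm g).mpr ⟨hg, ?_⟩, hdeg⟩
          rw [hdeg]
          exact (Nat.mem_divisors.mp hs).1
      rw [hfe]
      rw [Finset.sum_congr rfl (fun g hg => (Finset.mem_filter.mp hg).2)]
      rw [Finset.sum_const, smul_eq_mul, mul_comm]
    calc ∑ s ∈ t.divisors, s * (Tfil s).card
        = ∑ s ∈ t.divisors, ∑ g ∈ TD.filter (fun g => g.natDegree = s), g.natDegree :=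
          (Finset.sum_congr rfl h2).symm
      _ = ∑ g ∈ TD, g.natDegree := Finset.sum_fiberwise_of_maps_to hmap _
      _ = t * e := hD
  -- strong induction
  have hkey : ∀ t : ℕ, t ∣ m₁ → t * (Tfil t).card = t.totient * e := by
    intro t
    induction t using Nat.strong_induction_on with
    | _ t ih =>
      intro htm
      have ht0 : 0 < t := by
        rcases Nat.eq_zero_or_pos t with rfl | h
        · exact absurd (Nat.eq_zero_of_zero_dvd htm) hm₁_pos.ne'
        · exact h
      have hsum_t := hsum t ht0 htm
      have htotsum : ∑ s ∈ t.divisors, s.totient * e = t * e := by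
        rw [← Finset.sum_mul, Nat.sum_totient]
      have hmem : t ∈ t.divisors := Nat.mem_divisors_self t ht0.ne'
      rw [← Finset.add_sum_erase _ _ hmem] at hsum_t htotsum
      have herase : ∑ s ∈ t.divisors.erase t, s * (Tfil s).card
          = ∑ s ∈ t.divisors.erase t, s.totient * e := by
        refine Finset.sum_congr rfl fun s hs => ?_
        have hs' := Finset.mem_erase.mp hs
        have hsd : s ∣ t := (Nat.mem_divisors.mp hs'.2).1
        have hlt : s < t := lt_of_le_of_ne (Nat.le_of_dvd ht0 hsd) hs'.1
        exact ih s hlt (hsd.trans htm)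
      omega
  constructor
  · intro t htm
    have ht0 : 0 < t := by
      rcases Nat.eq_zero_or_pos t with rfl | h
      · exact absurd (Nat.eq_zero_of_zero_dvd htm) hm₁_pos.ne'
      · exact h
    rw [hAset t, Set.ncard_coe_finset]
    have hk := hkey t htm
    have htQ : (t : ℚ) ≠ 0 := Nat.cast_ne_zero.mpr ht0.ne'
    have hcast : (t : ℚ) * ((Tfil t).card : ℚ) = (t.totient : ℚ) * (e : ℚ) := by
      exact_mod_cast congrArg (Nat.cast : ℕ → ℚ) hk
    field_simp
    linarith
  · intro g hgm hgi hgd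
    have hgcd := hNT m₁ hm₁_pos dvd_rfl
    rw [hm₁e] at hgcd
    have hn_dvd : n ∣ q ^ m₁ - 1 := hgcd ▸ Nat.gcd_dvd_right n (q ^ m₁ - 1)
    have h2 : g ∣ (X ^ q ^ m₁ - X : F[X]) := by
      rw [hXX m₁ hm₁_pos]
      exact ((hgd.trans (hXdvd _ _ hn_dvd)).trans (dvd_mul_left _ _))
    exact (dvd_X_pow_card_pow_sub_X_iff hgm hgi hm₁_pos.ne').mp h2
end

section
/- Let q ≥ 2, w an odd prime, and n a positive integer with rad(n) | q^w - 1. Write n = w^{v_w(n)} · n₁ · n₂ where rad(n₁) | q-1, rad(n₂) | (q^w-1)/(q-1), and gcd(w, n₁n₂) = 1, assuming gcd(n, q-1, (q^w-1)/(q-1)) = w and v_w(n) < v_w(q^w - 1). Then gcd(n, q^w-1) = gcd(n/w, q-1) · gcd(n, (q^w-1)/(q-1)). -/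
/-!
Write `q ^ w - 1 = (q - 1) * Q` with `Q = (q ^ w - 1) / (q - 1)`. Since `w ∣ q - 1`, lifting the
exponent gives `v_w (q ^ w - 1) = v_w (q - 1) + 1`, so `v_w Q = 1`. The identity is then checked
prime by prime: at a prime `r ≠ w` one of `n`, `q - 1`, `Q` is prime to `r`, so
`min (v_r n) (v_r (q - 1) + v_r Q) = min (v_r n) (v_r (q - 1)) + min (v_r n) (v_r Q)`; at `w`,
`1 ≤ v_w n ≤ v_w (q - 1)` makes both sides equal to `v_w n`.
-/

namespace Nat

theorem gcd_mul_eq_gcd_div_mul_gcd {n a b p : ℕ} (hp : p.Prime) (ha : a ≠ 0)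
    (hb : b.factorization p = 1) (hgcd : n.gcd (a.gcd b) = p)
    (hlt : n.factorization p < (a * b).factorization p) :
    n.gcd (a * b) = (n / p).gcd a * n.gcd b := by
  rcases eq_or_ne n 0 with rfl | hn
  · simp
  have hb0 : b ≠ 0 := by rintro rfl; simp at hb
  have hpn : p ∣ n := hgcd ▸ n.gcd_dvd_left _
  have hnp : n / p ≠ 0 := (div_pos (le_of_dvd (pos_of_ne_zero hn) hpn) hp.pos).ne'
  refine eq_of_factorization_eq (gcd_ne_zero_left hn)
    (mul_ne_zero (gcd_ne_zero_right ha) (gcd_ne_zero_left hn)) fun r => ?_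
  have hgcd_r := congrArg (·.factorization r) hgcd
  simp only [factorization_gcd hn (gcd_ne_zero_left ha), factorization_gcd ha hb0,
    Finsupp.inf_apply, hp.factorization, Finsupp.single_apply] at hgcd_r
  rw [factorization_mul ha hb0] at hlt
  simp only [factorization_gcd hn (mul_ne_zero ha hb0), factorization_gcd hnp ha,
    factorization_gcd hn hb0, factorization_mul ha hb0, factorization_mul (gcd_ne_zero_left hnp)
    (gcd_ne_zero_left hn), factorization_div hpn, hp.factorization, Finsupp.coe_add,
    Finsupp.coe_tsub, Pi.add_apply, Pi.sub_apply, Finsupp.inf_apply, Finsupp.single_apply] at hlt ⊢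
  split_ifs at hgcd_r ⊢ with hpr
  · subst hpr; omega
  · omega

theorem factorization_pow_prime_sub_one {p q : ℕ} (hp : p.Prime) (hodd : Odd p) (hq : 1 < q)
    (hpq : p ∣ q - 1) : (q ^ p - 1).factorization p = (q - 1).factorization p + 1 := by
  have : Fact p.Prime := ⟨hp⟩
  have hpq_not : ¬p ∣ q := fun h => hp.one_lt.ne' <|
    (dvd_one.mp (by simpa [Nat.sub_sub_self hq.le] using Nat.dvd_sub h hpq))
  simpa [factorization_def _ hp, padicValNat.self hp.one_lt] using
    padicValNat.pow_sub_pow (y := 1) hodd hq (by simpa using hpq) hpq_not hp.ne_zero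

theorem factorization_pow_prime_sub_one_div_sub_one {p q : ℕ} (hp : p.Prime) (hodd : Odd p)
    (hq : 1 < q) (hpq : p ∣ q - 1) : ((q ^ p - 1) / (q - 1)).factorization p = 1 := by
  have hdvd : q - 1 ∣ q ^ p - 1 := by simpa using Nat.sub_dvd_pow_sub_pow q 1 p
  have hpow : q ^ p - 1 ≠ 0 := sub_ne_zero_of_lt (one_lt_pow hp.ne_zero hq)
  have h := factorization_pow_prime_sub_one hp hodd hq hpq
  rw [← Nat.mul_div_cancel' hdvd] at h hpow
  rw [factorization_mul (left_ne_zero_of_mul hpow) (right_ne_zero_of_mul hpow)] at h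
  simp only [Finsupp.coe_add, Pi.add_apply] at h
  omega

end Nat

theorem stmt_12_general (q w n : ℕ) (hq : 2 ≤ q) (hw : w.Prime) (hodd : Odd w)
    (hgcd : Nat.gcd n (Nat.gcd (q - 1) ((q ^ w - 1) / (q - 1))) = w)
    (hval : n.factorization w < (q ^ w - 1).factorization w) :
    Nat.gcd n (q ^ w - 1) =
      Nat.gcd (n / w) (q - 1) * Nat.gcd n ((q ^ w - 1) / (q - 1)) := by
  set Q := (q ^ w - 1) / (q - 1)
  have hw_dvd : w ∣ q - 1 := hgcd ▸ (Nat.gcd_dvd_right _ _).trans (Nat.gcd_dvd_left _ _)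
  have hsplit : q ^ w - 1 = (q - 1) * Q :=
    (Nat.mul_div_cancel' (by simpa using Nat.sub_dvd_pow_sub_pow q 1 w)).symm
  rw [hsplit] at hval ⊢
  exact Nat.gcd_mul_eq_gcd_div_mul_gcd hw (by omega)
    (Nat.factorization_pow_prime_sub_one_div_sub_one hw hodd hq hw_dvd) hgcd hval

theorem stmt_12 (q w n n₁ n₂ : ℕ) (hq : 2 ≤ q) (hw : w.Prime) (hodd : Odd w)
    (hn : 0 < n)
    (hrad : n.primeFactors.prod id ∣ (q ^ w - 1))
    (hdecomp : n = w ^ (n.factorization w) * n₁ * n₂)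
    (hn₁ : n₁.primeFactors.prod id ∣ (q - 1))
    (hn₂ : n₂.primeFactors.prod id ∣ ((q ^ w - 1) / (q - 1)))
    (hcopw : Nat.gcd w (n₁ * n₂) = 1)
    (hgcd : Nat.gcd n (Nat.gcd (q - 1) ((q ^ w - 1) / (q - 1))) = w)
    (hval : n.factorization w < (q ^ w - 1).factorization w) :
    Nat.gcd n (q ^ w - 1) =
      Nat.gcd (n / w) (q - 1) * Nat.gcd n ((q ^ w - 1) / (q - 1)) :=
  stmt_12_general q w n hq hw hodd hgcd hval
end

section
/- Let q be a prime power, w an odd prime with rad(n) | q^w - 1 for a positive integer n with 8 | n and q ≡ 3 (mod 4). Then gcd(n/2, q^w + 1) = gcd(n/2, q+1) = 2^r where r = min(v₂(n/2), v₂(q+1)). -/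
/-!
Every odd prime factor of `n` divides `q ^ w - 1`, so it divides neither `q ^ w + 1` nor its
divisor `q + 1`; hence both gcds are powers of `2`, with exponent the minimum of the 2-adic
valuations. These exponents agree because `q ^ w + 1 = (q + 1) * c` with `c` odd: writing
`w = 2j + 1`, the factor `q ^ 2 - 1 = (q + 1) (q - 1)` of `q ^ (2j) - 1` carries the even `q - 1`.
-/

theorem Nat.pow_add_one_eq_add_one_mul_odd {q w : ℕ} (hq : Odd q) (hw : Odd w) :
    ∃ c, q ^ w + 1 = (q + 1) * (2 * c + 1) := by
  obtain ⟨s, rfl⟩ := hq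
  obtain ⟨j, rfl⟩ := hw
  obtain ⟨u, hu⟩ := Nat.sub_one_dvd_pow_sub_one ((2 * s + 1) ^ 2) j
  refine ⟨s * (2 * s + 1) * u, ?_⟩
  have h1 : 1 ≤ ((2 * s + 1) ^ 2) ^ j := Nat.one_le_pow _ _ (by positivity)
  have h2 : 1 ≤ (2 * s + 1) ^ 2 := Nat.one_le_pow _ _ (by positivity)
  rw [pow_succ, pow_mul]
  zify [h1, h2] at hu ⊢
  linear_combination (2 * (s : ℤ) + 1) * hu

theorem Nat.factorization_two_pow_add_one_of_odd {q w : ℕ} (hq : Odd q) (hw : Odd w) :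
    (q ^ w + 1).factorization 2 = (q + 1).factorization 2 := by
  obtain ⟨c, hc⟩ := Nat.pow_add_one_eq_add_one_mul_odd hq hw
  have hc_odd : ¬2 ∣ 2 * c + 1 := by omega
  rw [hc, Nat.factorization_mul (by omega) (by omega), Finsupp.add_apply,
    Nat.factorization_eq_zero_of_not_dvd hc_odd, add_zero]

theorem Nat.gcd_eq_pow_min_factorization {a b p : ℕ} (hp : p.Prime) (ha : a ≠ 0) (hb : b ≠ 0)
    (h : ∀ d, d.Prime → d ∣ a → d ∣ b → d = p) :
    a.gcd b = p ^ min (a.factorization p) (b.factorization p) := by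
  have hg : a.gcd b ≠ 0 := Nat.gcd_ne_zero_left ha
  have hpow := Nat.eq_prime_pow_of_unique_prime_dvd hg fun hd hdg =>
    h _ hd (hdg.trans (Nat.gcd_dvd_left a b)) (hdg.trans (Nat.gcd_dvd_right a b))
  have hval := congrArg (· p) (Nat.factorization_gcd ha hb)
  simp only [Finsupp.inf_apply] at hval
  rw [hpow, Nat.factorization_pow_self hp] at hval
  rwa [← hval]

theorem Nat.eq_two_of_dvd_add_one_of_dvd_sub_one {p x : ℕ} (hp : p.Prime) (hadd : p ∣ x + 1)
    (hsub : p ∣ x - 1) : p = 2 := by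
  rcases x with _ | x
  · exact absurd (Nat.dvd_one.mp hadd) hp.ne_one
  · have h2 : p ∣ x + 1 + 1 - (x + 1 - 1) := Nat.dvd_sub hadd hsub
    rw [show x + 1 + 1 - (x + 1 - 1) = 2 by omega] at h2
    exact (Nat.prime_dvd_prime_iff_eq hp Nat.prime_two).mp h2

theorem stmt_13_general (q w n r : ℕ) (hodd : Odd w)
    (hn : 0 < n) (hrad : n.primeFactors.prod id ∣ (q ^ w - 1))
    (h8 : 8 ∣ n) (hq3 : q % 4 = 3)
    (hr : r = min ((n / 2).factorization 2) ((q + 1).factorization 2)) :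
    Nat.gcd (n / 2) (q ^ w + 1) = Nat.gcd (n / 2) (q + 1) ∧
    Nat.gcd (n / 2) (q + 1) = 2 ^ r := by
  have hm : n / 2 ≠ 0 := by have := Nat.le_of_dvd hn h8; omega
  have hmn : n / 2 ∣ n := Nat.div_dvd_of_dvd (dvd_trans (by norm_num) h8)
  have hgcd : ∀ x, x ≠ 0 → x ∣ q ^ w + 1 →
      (n / 2).gcd x = 2 ^ min ((n / 2).factorization 2) (x.factorization 2) :=
    fun x hx hdvd => Nat.gcd_eq_pow_min_factorization Nat.prime_two hm hx fun p hp hpm hpx =>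
      Nat.eq_two_of_dvd_add_one_of_dvd_sub_one hp (hpx.trans hdvd)
        ((Finset.dvd_prod_of_mem id
          (Nat.mem_primeFactors.mpr ⟨hp, hpm.trans hmn, hn.ne'⟩)).trans hrad)
  have hq_odd : Odd q := Nat.odd_iff.mpr (by omega)
  have hdvd : q + 1 ∣ q ^ w + 1 := by simpa using hodd.nat_add_dvd_pow_add_pow q 1
  rw [hgcd _ (by omega) dvd_rfl, hgcd _ (by omega) hdvd,
    Nat.factorization_two_pow_add_one_of_odd hq_odd hodd, hr]
  exact ⟨rfl, rfl⟩

theorem stmt_13 (q w n r : ℕ) (hq : IsPrimePow q) (hw : w.Prime) (hodd : Odd w)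
    (hn : 0 < n) (hrad : n.primeFactors.prod id ∣ (q ^ w - 1))
    (h8 : 8 ∣ n) (hq3 : q % 4 = 3)
    (hr : r = min ((n / 2).factorization 2) ((q + 1).factorization 2)) :
    Nat.gcd (n / 2) (q ^ w + 1) = Nat.gcd (n / 2) (q + 1) ∧
    Nat.gcd (n / 2) (q + 1) = 2 ^ r :=
  stmt_13_general q w n r hodd hn hrad h8 hq3 hr
end

section
/- Let q be a prime power, w an odd prime, and suppose rad(n) | q^w - 1 with 8 | n and q ≡ 3 (mod 4). Set r = min(v₂(n/2), v₂(q+1)). Then n/gcd(n, q^{2w}-1) = (n/gcd(n, q^w-1)) / 2^r, i.e., m_{2w} = m_w / 2^r. -/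
/-!
Factor `q^{2w} - 1 = (q^w - 1)(q^w + 1)` and use `gcd(n, ab) = gcd(n, a) · gcd(n / gcd(n, a), b)`.
Every odd prime of `n` divides `q^w - 1`, hence not `q^w + 1`, so the second factor is a power
of `2`. As `q^w ≡ 3 (mod 4)`, `v₂(q^w - 1) = 1`, so `v₂(n / gcd(n, q^w - 1)) = v₂(n / 2)`;
and `v₂(q^w + 1) = v₂(q + 1)` by lifting the exponent.
-/

theorem Nat.gcd_mul_eq_gcd_mul_gcd_div (n a b : ℕ) :
    n.gcd (a * b) = n.gcd a * (n / n.gcd a).gcd b := by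
  rcases Nat.eq_zero_or_pos (n.gcd a) with hg | hg
  · simp [Nat.gcd_eq_zero_iff.mp hg]
  obtain ⟨n', a', hcop, hn, ha⟩ := Nat.exists_coprime n a
  set g := n.gcd a
  have hn' : n / g = n' := by rw [hn, Nat.mul_div_cancel _ hg]
  calc n.gcd (a * b) = (g * n').gcd (g * (a' * b)) := by
        rw [mul_comm g n', ← hn, ← mul_assoc, mul_comm g a', ← ha]
    _ = g * (n / g).gcd b := by rw [Nat.gcd_mul_left, hcop.symm.gcd_mul_left_cancel_right, hn']

theorem Nat.gcd_eq_two_pow_of_prime_dvd_gcd {m b : ℕ} (hm : m ≠ 0) (hb : b ≠ 0)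
    (h : ∀ p, p.Prime → p ∣ m → p ∣ b → p = 2) :
    m.gcd b = 2 ^ min (m.factorization 2) (b.factorization 2) := by
  have hk := Nat.eq_prime_pow_of_unique_prime_dvd (Nat.gcd_ne_zero_left hm) fun hp hpg =>
    h _ hp (hpg.trans (m.gcd_dvd_left b)) (hpg.trans (m.gcd_dvd_right b))
  rw [← Finsupp.inf_apply, ← Nat.factorization_gcd hm hb]
  generalize m.gcd b = g at hk ⊢
  rw [hk, Nat.prime_two.factorization_pow, Finsupp.single_eq_same]

theorem Nat.factorization_two_eq_one_of_mod_four_eq_two {a : ℕ} (ha : a % 4 = 2) :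
    a.factorization 2 = 1 := by
  have h2 := (Nat.prime_two.pow_dvd_iff_le_factorization (k := 1) (n := a) (by omega)).mp
    (by omega)
  have h4 := (Nat.prime_two.pow_dvd_iff_le_factorization (k := 2) (n := a) (by omega)).not.mp
    (by omega)
  omega

theorem Nat.factorization_div_gcd_of_factorization_eq_one {p n a : ℕ} (hp : p.Prime)
    (hn : n ≠ 0) (hpn : p ∣ n) (ha : a.factorization p = 1) :
    (n / n.gcd a).factorization p = (n / p).factorization p := by
  have ha0 : a ≠ 0 := by rintro rfl; simp at ha
  have h1 : 1 ≤ n.factorization p := (hp.dvd_iff_one_le_factorization hn).mp hpn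
  rw [Nat.factorization_div (Nat.gcd_dvd_left n a), Nat.factorization_div hpn,
    Nat.factorization_gcd hn ha0, Finsupp.tsub_apply, Finsupp.tsub_apply, Finsupp.inf_apply, ha,
    hp.factorization_self]
  omega

theorem Nat.factorization_two_pow_add_one {q w : ℕ} (hq : 4 ∣ q + 1) (hw : Odd w) :
    (q ^ w + 1).factorization 2 = (q + 1).factorization 2 := by
  have h := Int.two_pow_sub_pow' w (x := q) (y := -1) (by simp; omega) (by omega)
  have hw2 : emultiplicity (2 : ℤ) w = 0 :=
    emultiplicity_eq_zero.mpr (by exact_mod_cast hw.not_two_dvd_nat)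
  rw [hw.neg_one_pow, sub_neg_eq_add, sub_neg_eq_add, hw2, add_zero] at h
  rw [Nat.factorization_def _ Nat.prime_two, Nat.factorization_def _ Nat.prime_two,
    ← Nat.cast_inj (R := ℕ∞), padicValNat_eq_emultiplicity (by positivity),
    padicValNat_eq_emultiplicity (by positivity), ← Int.natCast_emultiplicity,
    ← Int.natCast_emultiplicity]
  exact_mod_cast h

theorem stmt_15_general (q w n r : ℕ) (hodd : Odd w)
    (hn : 0 < n) (hrad : n.primeFactors.prod id ∣ (q ^ w - 1))
    (h8 : 8 ∣ n) (hq3 : q % 4 = 3)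
    (hr : r = min ((n / 2).factorization 2) ((q + 1).factorization 2)) :
    n / Nat.gcd n (q ^ (2 * w) - 1) = (n / Nat.gcd n (q ^ w - 1)) / 2 ^ r := by
  have hqw : q ^ w % 4 = 3 := by
    obtain ⟨k, rfl⟩ := hodd
    rw [Nat.pow_mod, hq3, pow_succ, pow_mul]
    norm_num [Nat.mul_mod, Nat.pow_mod]
  set A := q ^ w - 1
  have hAB : q ^ (2 * w) - 1 = A * (q ^ w + 1) := by
    rw [mul_comm, pow_mul, ← one_pow 2, Nat.sq_sub_sq, one_pow, mul_comm]
  have hv2 : (n / n.gcd A).factorization 2 = (n / 2).factorization 2 :=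
    Nat.factorization_div_gcd_of_factorization_eq_one Nat.prime_two hn.ne' (by omega)
      (Nat.factorization_two_eq_one_of_mod_four_eq_two (by omega))
  have hdiv : n / n.gcd A ≠ 0 :=
    (Nat.div_pos (Nat.gcd_le_left A hn) (Nat.gcd_pos_of_pos_left A hn)).ne'
  have hcommon_prime : ∀ p, p.Prime → p ∣ n / n.gcd A → p ∣ q ^ w + 1 → p = 2 := by
    intro p hp hpn hpB
    have hpA : p ∣ A := (Finset.dvd_prod_of_mem id (Nat.mem_primeFactors.mpr
      ⟨hp, hpn.trans (Nat.div_dvd_of_dvd (Nat.gcd_dvd_left n A)), hn.ne'⟩)).trans hrad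
    have hp2 : p ∣ 2 := by
      simpa [show q ^ w + 1 - A = 2 by omega] using Nat.dvd_sub hpB hpA
    exact (Nat.prime_dvd_prime_iff_eq hp Nat.prime_two).mp hp2
  rw [hAB, Nat.gcd_mul_eq_gcd_mul_gcd_div,
    Nat.gcd_eq_two_pow_of_prime_dvd_gcd hdiv (by omega) hcommon_prime, hv2,
    Nat.factorization_two_pow_add_one (by omega) hodd, ← hr, Nat.div_div_eq_div_mul]

theorem stmt_15 (q w n r : ℕ) (hq : IsPrimePow q) (hw : w.Prime) (hodd : Odd w)
    (hn : 0 < n) (hrad : n.primeFactors.prod id ∣ (q ^ w - 1))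
    (h8 : 8 ∣ n) (hq3 : q % 4 = 3)
    (hr : r = min ((n / 2).factorization 2) ((q + 1).factorization 2)) :
    n / Nat.gcd n (q ^ (2 * w) - 1) = (n / Nat.gcd n (q ^ w - 1)) / 2 ^ r :=
  stmt_15_general q w n r hodd hn hrad h8 hq3 hr
end
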